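/- arXiv:cs/0010008 — 2 statements merged into one kernel-verified Lean document; each statement's English description precedes it below -/
import Mathlib

section
/- The quasi-interpretation has the subterm property: for every ground term t and every symbol f of the signature, ⟦t⟧ ≤ ⟦f(…,t,…)⟧. -/
/-- The iterated polynomials: `F d 0 X = X ^ d` and `F d (k+1) = (F d k)` iterated `d` times. -/
def F (d : ℕ) : ℕ → ℕ → ℕ
  | 0 => fun X => X ^ d
  | k + 1 => (F d k)^[d]

/-- Ground terms over constructors `C` (constants and unary symbols) and
defined function symbols `D` (of arbitrary arity, given by the argument list). -/
inductive Tm (C D : Type) : Type where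
  | cnst : C → Tm C D
  | succ : C → Tm C D → Tm C D
  | fn : D → List (Tm C D) → Tm C D

/-- The quasi-interpretation of ground terms, parameterised by `d`, the rank
`rank f` of each defined symbol, and the valencies `nu f i ∈ {0,1}` (`true` = 1):
`⟦b⟧ = d`, `⟦c(t)⟧ = ⟦t⟧ + d`, and
`⟦f(t₁,…,tₙ)⟧ = F_{rank f}(max(d, Σ_{ν(f,i)=1} ⟦tᵢ⟧)) + max_{ν(f,i)=0} ⟦tᵢ⟧`. -/
def Tm.val {C D : Type} (d : ℕ) (rank : D → ℕ) (nu : D → ℕ → Bool) : Tm C D → ℕ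
  | .cnst _ => d
  | .succ _ t => Tm.val d rank nu t + d
  | .fn f ts =>
      let vs := ts.attach.map fun x => Tm.val d rank nu x.1
      F d (rank f)
        (max d (((List.range ts.length).map fun i => if nu f i then vs.getD i 0 else 0).sum))
      + (((List.range ts.length).map fun i => if nu f i then 0 else vs.getD i 0).foldr max 0)
decreasing_by
  all_goals simp only [Tm.fn.sizeOf_spec, Tm.succ.sizeOf_spec]
  all_goals first
    | omega
    | (have h := List.sizeOf_lt_of_mem x.2; omega)

lemma le_iter' {f : ℕ → ℕ} (hf : ∀ y, y ≤ f y) (n X : ℕ) : X ≤ f^[n] X := by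
  induction n with
  | zero => simp
  | succ n ih => rw [Function.iterate_succ_apply']; exact le_trans ih (hf _)

lemma le_F (d : ℕ) (hd : 1 ≤ d) (k X : ℕ) : X ≤ F d k X := by
  induction k generalizing X with
  | zero => exact Nat.le_self_pow (by omega) X
  | succ k ih => exact le_iter' ih d X

lemma le_foldr_max {a : ℕ} {l : List ℕ} (h : a ∈ l) : a ≤ l.foldr max 0 := by
  induction l with
  | nil => simp at h
  | cons b l ih =>
    rcases List.mem_cons.1 h with rfl | h
    · exact le_max_left _ _
    · exact le_trans (ih h) (le_max_right _ _)

/-- Subterm property of the quasi-interpretation: `⟦t⟧ ≤ ⟦f(…,t,…)⟧` for every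
ground term `t` and every symbol `f` of the signature (unary constructor or
defined symbol), at any argument position. -/
theorem stmt_12 {C D : Type} (d : ℕ) (hd : 2 ≤ d) (rank : D → ℕ)
    (nu : D → ℕ → Bool) (t : Tm C D) :
    (∀ c : C, Tm.val d rank nu t ≤ Tm.val d rank nu (.succ c t)) ∧
    (∀ (f : D) (as bs : List (Tm C D)),
      Tm.val d rank nu t ≤ Tm.val d rank nu (.fn f (as ++ t :: bs))) := by
  constructor
  · intro c
    simp [Tm.val]
  · intro f as bs
    set ts := as ++ t :: bs with hts
    set i := as.length with hi
    have hilt : i < ts.length := by simp [hts, hi]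
    rw [Tm.val]
    set vs := ts.attach.map fun x => Tm.val d rank nu x.1 with hvs
    have hvslen : vs.length = ts.length := by simp [hvs]
    have hget : vs.getD i 0 = Tm.val d rank nu t := by
      rw [List.getD_eq_getElem vs 0 (by omega)]
      simp only [hvs, List.getElem_map, List.getElem_attach]
      congr 1
      show (as ++ t :: bs)[i]'(by simp [hts, hi]) = t
      rw [List.getElem_append_right (by omega)]
      simp [hi]
    by_cases hnu : nu f i
    · have hmem : vs.getD i 0 ∈
          (List.range ts.length).map fun j => if nu f j then vs.getD j 0 else 0 := by
        refine List.mem_map.2 ⟨i, List.mem_range.2 hilt, ?_⟩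
        simp [hnu]
      have h1 : Tm.val d rank nu t ≤
          ((List.range ts.length).map fun j => if nu f j then vs.getD j 0 else 0).sum := by
        rw [← hget]
        exact List.single_le_sum (fun x _ => Nat.zero_le x) _ hmem
      calc Tm.val d rank nu t
          ≤ max d (((List.range ts.length).map
              fun j => if nu f j then vs.getD j 0 else 0).sum) := le_trans h1 (le_max_right _ _)
        _ ≤ F d (rank f) _ := le_F d (by omega) _ _
        _ ≤ _ := Nat.le_add_right _ _
    · have hmem : vs.getD i 0 ∈
          (List.range ts.length).map fun j => if nu f j then 0 else vs.getD j 0 := by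
        refine List.mem_map.2 ⟨i, List.mem_range.2 hilt, ?_⟩
        simp [hnu]
      have h1 : Tm.val d rank nu t ≤
          ((List.range ts.length).map fun j => if nu f j then 0 else vs.getD j 0).foldr max 0 := by
        rw [← hget]; exact le_foldr_max hmem
      exact le_trans h1 (Nat.le_add_left _ _)
end

section
/- For a defined symbol f of rank k on constructor-term inputs a₁,…,a_n, setting P(X) = F_k(d·X) + d·X, we have ⟦f(a₁,…,a_n)⟧ ≤ P(Σᵢ |aᵢ|). -/
inductive Ct (C : Type) : Type where
  | cnst : C → Ct C
  | succ : C → Ct C → Ct C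

def Ct.size {C : Type} : Ct C → ℕ
  | .cnst _ => 1
  | .succ _ a => Ct.size a + 1

def Ct.toTm {C D : Type} : Ct C → Tm C D
  | .cnst b => .cnst b
  | .succ c a => .succ c (Ct.toTm a)

lemma val_toTm {C D : Type} (d : ℕ) (rank : D → ℕ) (nu : D → ℕ → Bool) (a : Ct C) :
    Tm.val d rank nu (Ct.toTm a : Tm C D) = d * a.size := by
  induction a with
  | cnst b => simp [Ct.toTm, Ct.size, Tm.val]
  | succ c a ih => simp [Ct.toTm, Ct.size, Tm.val, ih, mul_add]

lemma F_mono (d k : ℕ) : Monotone (F d k) := by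
  induction k with
  | zero => exact fun a b h => Nat.pow_le_pow_left h d
  | succ k ih => exact ih.iterate d

lemma sum_getD (l : List ℕ) : ((List.range l.length).map fun i => l.getD i 0).sum = l.sum := by
  induction l with
  | nil => simp
  | cons a l ih =>
    rw [List.length_cons, List.range_succ_eq_map, List.map_cons, List.map_map, List.sum_cons]
    simp only [Function.comp_def, List.getD_cons_succ, List.getD_cons_zero, ih, List.sum_cons]

lemma getD_le_sum (l : List ℕ) (i : ℕ) : l.getD i 0 ≤ l.sum := by
  induction l generalizing i with
  | nil => simp
  | cons a l ih =>
    cases i with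
    | zero => simp
    | succ i =>
      rw [List.getD_cons_succ, List.sum_cons]
      exact le_trans (ih i) (Nat.le_add_left _ _)

lemma foldr_max_le {l : List ℕ} {T : ℕ} (h : ∀ x ∈ l, x ≤ T) : l.foldr max 0 ≤ T := by
  induction l with
  | nil => simpa using Nat.zero_le T
  | cons a l ih =>
    simp only [List.foldr_cons]
    exact max_le (h a (by simp)) (ih fun x hx => h x (List.mem_cons_of_mem _ hx))

lemma mul_sum_sizes {C : Type} (d : ℕ) (as : List (Ct C)) :
    (as.map fun a => d * a.size).sum = d * (as.map Ct.size).sum := by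
  induction as with
  | nil => simp
  | cons a as ih => simp [ih, mul_add]

/-- For a defined symbol `f` of rank `k` applied to constructor-term inputs
`a₁,…,aₙ` (with `n > 0`, as every defined symbol has positive arity), setting
`P(X) = F_k(d·X) + d·X`, we have `⟦f(a₁,…,aₙ)⟧ ≤ P(Σᵢ |aᵢ|)`. -/
theorem stmt_14 {C D : Type} (d : ℕ) (hd : 2 ≤ d) (rank : D → ℕ)
    (nu : D → ℕ → Bool) (f : D) (as : List (Ct C)) (hne : as ≠ []) :
    Tm.val d rank nu (.fn f (as.map Ct.toTm)) ≤
      F d (rank f) (d * (as.map Ct.size).sum) + d * (as.map Ct.size).sum := by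
  rw [Tm.val]
  set ts : List (Tm C D) := as.map Ct.toTm with hts
  set T := d * (as.map Ct.size).sum with hT
  have hvs : (ts.attach.map fun x => Tm.val d rank nu x.1) = as.map (fun a => d * a.size) := by
    rw [List.attach_map_val]
    simp [hts, List.map_map, Function.comp, val_toTm]
  rw [hvs]
  set vs := as.map (fun a => d * a.size) with hvsdef
  have hsum : vs.sum = T := by
    rw [hvsdef, hT]
    exact mul_sum_sizes d as
  have hlen : ts.length = vs.length := by simp [hts, hvsdef]
  have hdT : d ≤ T := by
    obtain ⟨a, as', rfl⟩ : ∃ a as', as = a :: as' := by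
      cases as with
      | nil => exact absurd rfl hne
      | cons a as' => exact ⟨a, as', rfl⟩
    have : 1 ≤ a.size := by cases a <;> simp [Ct.size]
    have : 1 ≤ ((a :: as').map Ct.size).sum := by simp; omega
    calc d = d * 1 := (mul_one d).symm
      _ ≤ T := Nat.mul_le_mul_left d this
  have h1 : max d (((List.range ts.length).map fun i => if nu f i then vs.getD i 0 else 0).sum) ≤ T := by
    refine max_le hdT ?_
    calc ((List.range ts.length).map fun i => if nu f i then vs.getD i 0 else 0).sum
        ≤ ((List.range ts.length).map fun i => vs.getD i 0).sum := by
          apply List.sum_le_sum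
          intro i _
          split <;> simp
      _ = vs.sum := by rw [hlen, sum_getD]
      _ = T := hsum
  have h2 : (((List.range ts.length).map fun i => if nu f i then 0 else vs.getD i 0).foldr max 0) ≤ T := by
    apply foldr_max_le
    intro x hx
    simp only [List.mem_map, List.mem_range] at hx
    obtain ⟨i, _, rfl⟩ := hx
    split
    · exact Nat.zero_le T
    · exact le_trans (getD_le_sum vs i) (le_of_eq hsum)
  exact Nat.add_le_add (F_mono d (rank f) h1) h2
end
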